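/- Let K ⊆ ℝ³ be a closed convex set such that for every boundary point y of K there exists a vector n ∈ ℝ³ with ⟨n,n⟩₋ < 0 and n₃ > 0 (a future timelike normal) satisfying ⟨z − y, n⟩₋ ≤ 0 for all z ∈ K (i.e., K lies on the future side of a spacelike support plane through y). Then for any two distinct boundary points x, y of K, the segment between x and y is spacelike: ⟨x − y, x − y⟩₋ > 0. -/
import Mathlib


/-- The Minkowski bilinear form on ℝ³: `⟨x,y⟩₋ = x₁y₁ + x₂y₂ − x₃y₃`. -/
def minkBilin (x y : Fin 3 → ℝ) : ℝ := x 0 * y 0 + x 1 * y 1 - x 2 * y 2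

/-- Key lemma: a future causal vector `(a,b,c)` pairs negatively
with a future timelike vector `(p,q,r)`. -/
lemma key (a b c p q r : ℝ) (hv : a * a + b * b ≤ c * c) (hn : p * p + q * q < r * r)
    (hr : 0 < r) (hc : 0 < c) : a * p + b * q - c * r < 0 := by
  have h1 : (a*p + b*q)^2 ≤ (a*a + b*b) * (p*p + q*q) := by nlinarith [sq_nonneg (a*q - b*p)]
  have hab : (0:ℝ) ≤ a*a + b*b := by nlinarith [mul_self_nonneg a, mul_self_nonneg b]
  rcases eq_or_lt_of_le hab with h0 | hpos
  · have ha : a = 0 := by nlinarith [mul_self_nonneg a, mul_self_nonneg b]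
    have hb : b = 0 := by nlinarith [mul_self_nonneg a, mul_self_nonneg b]
    rw [ha, hb]; nlinarith [mul_pos hc hr]
  · have h2 : (a*a + b*b) * (p*p + q*q) < (a*a + b*b) * (r*r) :=
      mul_lt_mul_of_pos_left hn hpos
    have h3 : (a*a + b*b) * (r*r) ≤ (c*c) * (r*r) :=
      mul_le_mul_of_nonneg_right hv (by nlinarith [mul_self_nonneg r])
    nlinarith [mul_pos hc hr, sq_nonneg (a*p + b*q - c*r)]

/-- if every boundary point of the closed convex set `K ⊆ ℝ³` admits a
spacelike support plane (with future timelike normal), then the segment between any two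
distinct boundary points of `K` is spacelike. -/
theorem stmt9 (K : Set (Fin 3 → ℝ)) (hKclosed : IsClosed K) (hKconv : Convex ℝ K)
    (hsupp : ∀ y ∈ frontier K, ∃ n : Fin 3 → ℝ, minkBilin n n < 0 ∧ 0 < n 2 ∧
      ∀ z ∈ K, minkBilin (z - y) n ≤ 0) :
    ∀ x ∈ frontier K, ∀ y ∈ frontier K, x ≠ y → 0 < minkBilin (x - y) (x - y) := by
  intro x hx y hy hxy
  by_contra h
  push_neg at h
  obtain ⟨n, hn, hn2, hsx⟩ := hsupp x hx
  obtain ⟨m, hm, hm2, hsy⟩ := hsupp y hy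
  have hxK : x ∈ K := hKclosed.closure_eq ▸ hx.1
  have hyK : y ∈ K := hKclosed.closure_eq ▸ hy.1
  have h1 := hsx y hyK
  have h2 := hsy x hxK
  simp only [minkBilin, Pi.sub_apply] at h h1 h2 hn hm
  rcases lt_trichotomy (x 2 - y 2) 0 with hc | hc | hc
  · -- y - x is future causal; contradicts support plane at y
    have := key (y 0 - x 0) (y 1 - x 1) (y 2 - x 2) (m 0) (m 1) (m 2)
      (by linarith) (by linarith) hm2 (by linarith)
    linarith
  · -- x 2 = y 2 forces x = y
    have ha : x 0 - y 0 = 0 := by nlinarith [mul_self_nonneg (x 0 - y 0), mul_self_nonneg (x 1 - y 1)]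
    have hb : x 1 - y 1 = 0 := by nlinarith [mul_self_nonneg (x 0 - y 0), mul_self_nonneg (x 1 - y 1)]
    apply hxy
    funext i
    fin_cases i <;> simp <;> linarith
  · -- x - y is future causal; contradicts support plane at x
    have := key (x 0 - y 0) (x 1 - y 1) (x 2 - y 2) (n 0) (n 1) (n 2)
      (by linarith) (by linarith) hn2 hc
    linarith
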